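/- Under the mean curvature flow in R^n, the squared norm of the mean curvature vector satisfies d/dt |H|² = Δ|H|² − 2|∇^⊥ H|² + 2|a_{ij}|², where ∇^⊥ is the normal connection and a_{ij} = g_{αβ} H^α A^β_{ij}. -/

import Mathlib

noncomputable section

open Real Finset

/-- Partial derivative of a scalar function on `ℝ^m` in direction `i`. -/
def pd {m : ℕ} (f : (Fin m → ℝ) → ℝ) (i : Fin m) (x : Fin m → ℝ) : ℝ :=
  fderiv ℝ f x (Pi.single i 1)

/-- Components `F^α_i` of the differential of an immersion `F : ℝ^m → ℝ^n`. -/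
def Fd {m n : ℕ} (F : (Fin m → ℝ) → (Fin n → ℝ)) (α : Fin n) (i : Fin m)
    (x : Fin m → ℝ) : ℝ :=
  pd (fun y => F y α) i x

/-- Induced metric `g_{ij} = ⟨F_i, F_j⟩`. -/
def gInd {m n : ℕ} (F : (Fin m → ℝ) → (Fin n → ℝ)) (i j : Fin m) (x : Fin m → ℝ) : ℝ :=
  ∑ α, Fd F α i x * Fd F α j x

/-- Induced metric as a matrix. -/
def gMat {m n : ℕ} (F : (Fin m → ℝ) → (Fin n → ℝ)) (x : Fin m → ℝ) :
    Matrix (Fin m) (Fin m) ℝ :=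
  fun i j => gInd F i j x

/-- Inverse metric `g^{ij}`. -/
def gInv {m n : ℕ} (F : (Fin m → ℝ) → (Fin n → ℝ)) (i j : Fin m) (x : Fin m → ℝ) : ℝ :=
  (gMat F x)⁻¹ i j

/-- Christoffel symbols `Γ^k_{ij}` of the induced metric. -/
def chr {m n : ℕ} (F : (Fin m → ℝ) → (Fin n → ℝ)) (k i j : Fin m) (x : Fin m → ℝ) : ℝ :=
  (1/2) * ∑ l, gInv F k l x *
    (pd (gInd F l j) i x + pd (gInd F l i) j x - pd (gInd F i j) l x)

/-- Second fundamental form `A^α_{ij} = F^α_{ij} - Γ^k_{ij} F^α_k`. -/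
def sff {m n : ℕ} (F : (Fin m → ℝ) → (Fin n → ℝ)) (α : Fin n) (i j : Fin m)
    (x : Fin m → ℝ) : ℝ :=
  pd (fun y => Fd F α j y) i x - ∑ k, chr F k i j x * Fd F α k x

/-- Mean curvature vector `H^α = g^{ij} A^α_{ij}`. -/
def mcv {m n : ℕ} (F : (Fin m → ℝ) → (Fin n → ℝ)) (α : Fin n) (x : Fin m → ℝ) : ℝ :=
  ∑ i, ∑ j, gInv F i j x * sff F α i j x

/-- Riemann curvature tensor `R^l_{kij}` of the induced metric. -/
def riem {m n : ℕ} (F : (Fin m → ℝ) → (Fin n → ℝ)) (l k i j : Fin m) (x : Fin m → ℝ) : ℝ :=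
  pd (fun y => chr F l j k y) i x - pd (fun y => chr F l i k y) j x
    + ∑ p, (chr F l i p x * chr F p j k x - chr F l j p x * chr F p i k x)

/-- Riemann curvature tensor with all indices lowered, `R_{ijkl} = g_{ip} R^p_{jkl}`. -/
def riemLow {m n : ℕ} (F : (Fin m → ℝ) → (Fin n → ℝ)) (i j k l : Fin m) (x : Fin m → ℝ) : ℝ :=
  ∑ p, gInd F i p x * riem F p j k l x

/-- Ricci curvature `R_{ij} = R^k_{ikj}` of the induced metric. -/
def ricci {m n : ℕ} (F : (Fin m → ℝ) → (Fin n → ℝ)) (i j : Fin m) (x : Fin m → ℝ) : ℝ :=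
  ∑ k, riem F k i k j x

/-- Tangential projector `T^α_β = g^{ij} F^α_i F^β_j` onto the tangent space. -/
def tanP {m n : ℕ} (F : (Fin m → ℝ) → (Fin n → ℝ)) (α β : Fin n) (x : Fin m → ℝ) : ℝ :=
  ∑ i, ∑ j, gInv F i j x * Fd F α i x * Fd F β j x

/-- Normal projector `N = id - T` onto the normal bundle. -/
def norP {m n : ℕ} (F : (Fin m → ℝ) → (Fin n → ℝ)) (α β : Fin n) (x : Fin m → ℝ) : ℝ :=
  (if α = β then 1 else 0) - tanP F α β x

/-- Derivative of the normal projector. -/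
def dnorP {m n : ℕ} (F : (Fin m → ℝ) → (Fin n → ℝ)) (i : Fin m) (α β : Fin n)
    (x : Fin m → ℝ) : ℝ :=
  pd (fun y => norP F α β y) i x

/-- Curvature `R^{αβ}_{ij}` of the normal connection (the connection `N ∘ d` on the
normal bundle `im N`), given by the standard formula `N (∂_i N ∂_j N - ∂_j N ∂_i N) N`. -/
def normCurv {m n : ℕ} (F : (Fin m → ℝ) → (Fin n → ℝ)) (α β : Fin n) (i j : Fin m)
    (x : Fin m → ℝ) : ℝ :=
  ∑ γ, ∑ δ, ∑ ε,
    norP F α γ x * (dnorP F i γ δ x * dnorP F j δ ε x - dnorP F j γ δ x * dnorP F i δ ε x)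
      * norP F ε β x

/-- Covariant derivative `∇_l A^α_{ij}` of the second fundamental form, using the full
induced connection (the pullback connection on `F⁻¹Tℝⁿ` is flat in cartesian coordinates). -/
def covA {m n : ℕ} (F : (Fin m → ℝ) → (Fin n → ℝ)) (l : Fin m) (α : Fin n) (i j : Fin m)
    (x : Fin m → ℝ) : ℝ :=
  pd (fun y => sff F α i j y) l x - ∑ k, chr F k l i x * sff F α k j x
    - ∑ k, chr F k l j x * sff F α i k x

/-- Second covariant derivative `∇_p ∇_l A^α_{ij}`. -/
def cov2A {m n : ℕ} (F : (Fin m → ℝ) → (Fin n → ℝ)) (p l : Fin m) (α : Fin n) (i j : Fin m)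
    (x : Fin m → ℝ) : ℝ :=
  pd (fun y => covA F l α i j y) p x - ∑ k, chr F k p l x * covA F k α i j x
    - ∑ k, chr F k p i x * covA F l α k j x - ∑ k, chr F k p j x * covA F l α i k x

/-- Covariant Hessian `∇_l ∇_k H^α` of the mean curvature vector. -/
def hessH {m n : ℕ} (F : (Fin m → ℝ) → (Fin n → ℝ)) (α : Fin n) (l k : Fin m)
    (x : Fin m → ℝ) : ℝ :=
  pd (fun y => pd (fun z => mcv F α z) k y) l x - ∑ p, chr F p l k x * pd (fun z => mcv F α z) p x

/-- Covariant derivative `∇_l R_{ij}` of the Ricci tensor. -/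
def covRic {m n : ℕ} (F : (Fin m → ℝ) → (Fin n → ℝ)) (l i j : Fin m) (x : Fin m → ℝ) : ℝ :=
  pd (fun y => ricci F i j y) l x - ∑ p, chr F p l i x * ricci F p j x
    - ∑ p, chr F p l j x * ricci F i p x

/-- The tensor `a_{ij} = g_{αβ} H^α A^β_{ij}`. -/
def aT {m n : ℕ} (F : (Fin m → ℝ) → (Fin n → ℝ)) (i j : Fin m) (x : Fin m → ℝ) : ℝ :=
  ∑ α, mcv F α x * sff F α i j x

/-- The tensor `b_{ij} = g_{αβ} A^α_{ik} A^{βk}_j`. -/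
def bT {m n : ℕ} (F : (Fin m → ℝ) → (Fin n → ℝ)) (i j : Fin m) (x : Fin m → ℝ) : ℝ :=
  ∑ α, ∑ k, ∑ l, gInv F k l x * sff F α i k x * sff F α j l x

/-- Squared norm `|H|²` of the mean curvature vector. -/
def normH2 {m n : ℕ} (F : (Fin m → ℝ) → (Fin n → ℝ)) (x : Fin m → ℝ) : ℝ :=
  ∑ α, (mcv F α x) ^ 2

/-- Squared norm `|A|²` of the second fundamental form. -/
def normA2 {m n : ℕ} (F : (Fin m → ℝ) → (Fin n → ℝ)) (x : Fin m → ℝ) : ℝ :=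
  ∑ α, ∑ i, ∑ j, ∑ k, ∑ l,
    gInv F i k x * gInv F j l x * sff F α i j x * sff F α k l x

/-- Squared norm `|a_{ij}|²`. -/
def normaT2 {m n : ℕ} (F : (Fin m → ℝ) → (Fin n → ℝ)) (x : Fin m → ℝ) : ℝ :=
  ∑ i, ∑ j, ∑ k, ∑ l, gInv F i k x * gInv F j l x * aT F i j x * aT F k l x

/-- Components `∇_i H^α + a_i^l F^α_l` of the normal covariant derivative of `H`. -/
def nperpH {m n : ℕ} (F : (Fin m → ℝ) → (Fin n → ℝ)) (i : Fin m) (α : Fin n)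
    (x : Fin m → ℝ) : ℝ :=
  pd (fun y => mcv F α y) i x + ∑ l, ∑ k, gInv F l k x * aT F i k x * Fd F α l x

/-- Squared norm `|∇^⊥ H|²`. -/
def normNperpH2 {m n : ℕ} (F : (Fin m → ℝ) → (Fin n → ℝ)) (x : Fin m → ℝ) : ℝ :=
  ∑ α, ∑ i, ∑ j, gInv F i j x * nperpH F i α x * nperpH F j α x

/-- Components `∇_l A^α_{ij} + A^β_{ij} A^k_{βl} F^α_k` of the normal covariant
derivative of `A`. -/
def nperpA {m n : ℕ} (F : (Fin m → ℝ) → (Fin n → ℝ)) (l : Fin m) (α : Fin n) (i j : Fin m)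
    (x : Fin m → ℝ) : ℝ :=
  covA F l α i j x + ∑ β, ∑ k, ∑ p, sff F β i j x * gInv F k p x * sff F β p l x * Fd F α k x

/-- Squared norm `|∇^⊥ A|²`. -/
def normNperpA2 {m n : ℕ} (F : (Fin m → ℝ) → (Fin n → ℝ)) (x : Fin m → ℝ) : ℝ :=
  ∑ α, ∑ l, ∑ l', ∑ i, ∑ i', ∑ j, ∑ j',
    gInv F l l' x * gInv F i i' x * gInv F j j' x * nperpA F l α i j x * nperpA F l' α i' j' x

/-- The symmetric bilinear form `S^{αβ} = A^{αm}_n A^{βn}_m` on the normal bundle. -/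
def ssf {m n : ℕ} (F : (Fin m → ℝ) → (Fin n → ℝ)) (α β : Fin n) (x : Fin m → ℝ) : ℝ :=
  ∑ i, ∑ j, (∑ k, gInv F i k x * sff F α k j x) * (∑ p, gInv F j p x * sff F β p i x)

/-- Squared norm `|A^{αm}_n A^{βn}_m|²`. -/
def normSsf2 {m n : ℕ} (F : (Fin m → ℝ) → (Fin n → ℝ)) (x : Fin m → ℝ) : ℝ :=
  ∑ α, ∑ β, (ssf F α β x) ^ 2

/-- Squared norm `|R^⊥|²` of the normal curvature. -/
def normRperp2 {m n : ℕ} (F : (Fin m → ℝ) → (Fin n → ℝ)) (x : Fin m → ℝ) : ℝ :=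
  ∑ α, ∑ β, ∑ i, ∑ j, ∑ k, ∑ l,
    gInv F i k x * gInv F j l x * normCurv F α β i j x * normCurv F α β k l x

/-- Riemannian volume density `√(det g)`. -/
def volDens {m n : ℕ} (F : (Fin m → ℝ) → (Fin n → ℝ)) (x : Fin m → ℝ) : ℝ :=
  Real.sqrt (gMat F x).det

/-- Laplace–Beltrami operator on scalar functions, `Δf = g^{ij}(∂_i∂_j f - Γ^k_{ij} ∂_k f)`. -/
def lapBel {m n : ℕ} (F : (Fin m → ℝ) → (Fin n → ℝ)) (f : (Fin m → ℝ) → ℝ)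
    (x : Fin m → ℝ) : ℝ :=
  ∑ i, ∑ j, gInv F i j x * (pd (fun y => pd f i y) j x - ∑ k, chr F k i j x * pd f k x)


variable {m : ℕ}

lemma pd_congr_nhds {f g : (Fin m → ℝ) → ℝ} {x : Fin m → ℝ} (h : f =ᶠ[nhds x] g) (i : Fin m) :
    pd f i x = pd g i x := by unfold pd; rw [h.fderiv_eq]

lemma pd_mul {f g : (Fin m → ℝ) → ℝ} {x : Fin m → ℝ} (hf : DifferentiableAt ℝ f x)
    (hg : DifferentiableAt ℝ g x) (i : Fin m) :
    pd (fun y => f y * g y) i x = pd f i x * g x + f x * pd g i x := by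
  unfold pd; rw [fderiv_fun_mul hf hg]; simp [mul_comm]; ring

lemma pd_sum {ι : Type*} {s : Finset ι} {f : ι → (Fin m → ℝ) → ℝ} {x : Fin m → ℝ}
    (hf : ∀ a ∈ s, DifferentiableAt ℝ (f a) x) (i : Fin m) :
    pd (fun y => ∑ a ∈ s, f a y) i x = ∑ a ∈ s, pd (f a) i x := by
  unfold pd; rw [fderiv_fun_sum hf]; simp

lemma pd_const (c : ℝ) (i : Fin m) (x : Fin m → ℝ) : pd (fun _ => c) i x = 0 := by
  simp [pd]

lemma pd_const_mul {f : (Fin m → ℝ) → ℝ} {x : Fin m → ℝ} (hf : DifferentiableAt ℝ f x)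
    (c : ℝ) (i : Fin m) : pd (fun y => c * f y) i x = c * pd f i x := by
  unfold pd; rw [fderiv_const_mul hf]; simp

/-- Joint smoothness of `pd` in parameter and point. -/
lemma contDiffAt_pd_uncurry {u : ℝ → (Fin m → ℝ) → ℝ} {q : ℝ × (Fin m → ℝ)}
    (hu : ContDiffAt ℝ (⊤ : ℕ∞) (fun p : ℝ × (Fin m → ℝ) => u p.1 p.2) q) (i : Fin m) :
    ContDiffAt ℝ (⊤ : ℕ∞) (fun p : ℝ × (Fin m → ℝ) => pd (u p.1) i p.2) q := by
  have h1 : ContDiffAt ℝ (⊤ : ℕ∞) (fun p : ℝ × (Fin m → ℝ) => fderiv ℝ (u p.1) p.2) q := by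
    apply ContDiffAt.fderiv (f := fun (p : ℝ × (Fin m → ℝ)) (y : Fin m → ℝ) => u p.1 y)
      (g := Prod.snd) (n := ((⊤ : ℕ∞) : WithTop ℕ∞)) _ contDiffAt_snd (by simp)
    exact ContDiffAt.comp (g := fun p : ℝ × (Fin m → ℝ) => u p.1 p.2)
      (f := fun w : (ℝ × (Fin m → ℝ)) × (Fin m → ℝ) => (w.1.1, w.2)) _ hu
      ((contDiff_fst.fst.prodMk contDiff_snd).contDiffAt)
  exact ((ContinuousLinearMap.apply ℝ ℝ (Pi.single i 1 : Fin m → ℝ)).contDiff).comp_contDiffAt q h1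

/-- Spatial smoothness of `pd`. -/
lemma contDiffAt_pd {f : (Fin m → ℝ) → ℝ} {x : Fin m → ℝ}
    (hf : ContDiffAt ℝ (⊤ : ℕ∞) f x) (i : Fin m) :
    ContDiffAt ℝ (⊤ : ℕ∞) (fun y => pd f i y) x :=
  ((ContinuousLinearMap.apply ℝ ℝ (Pi.single i 1 : Fin m → ℝ)).contDiff).comp_contDiffAt x
    (hf.fderiv_right (by simp))

lemma contDiffAt_slice_snd {u : ℝ → (Fin m → ℝ) → ℝ} {t : ℝ} {x : Fin m → ℝ}
    (hu : ContDiffAt ℝ (⊤ : ℕ∞) (fun p : ℝ × (Fin m → ℝ) => u p.1 p.2) (t, x)) :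
    ContDiffAt ℝ (⊤ : ℕ∞) (fun y => u t y) x :=
  hu.comp x ((contDiff_const.prodMk contDiff_id).contDiffAt)

lemma contDiffAt_slice_fst {u : ℝ → (Fin m → ℝ) → ℝ} {t : ℝ} {x : Fin m → ℝ}
    (hu : ContDiffAt ℝ (⊤ : ℕ∞) (fun p : ℝ × (Fin m → ℝ) => u p.1 p.2) (t, x)) :
    ContDiffAt ℝ (⊤ : ℕ∞) (fun s => u s x) t :=
  hu.comp t ((contDiff_id.prodMk contDiff_const).contDiffAt)



variable {m : ℕ}

/-- Mixed partials commute: time derivative of a spatial partial equals the spatial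
partial of the time derivative, for jointly smooth functions. -/
lemma deriv_pd_comm {u : ℝ → (Fin m → ℝ) → ℝ} {t : ℝ} {x : Fin m → ℝ}
    (hu : ContDiffAt ℝ (⊤ : ℕ∞) (fun p : ℝ × (Fin m → ℝ) => u p.1 p.2) (t, x)) (i : Fin m) :
    deriv (fun s => pd (u s) i x) t = pd (fun y => deriv (fun s => u s y) t) i x := by
  set U : ℝ × (Fin m → ℝ) → ℝ := fun p => u p.1 p.2 with hU
  have hev : ∀ᶠ p in nhds (t, x), ContDiffAt ℝ 2 U p := (hu.of_le (WithTop.coe_le_coe.mpr le_top)).eventually (by simp)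
  set f' : ℝ × (Fin m → ℝ) → (ℝ × (Fin m → ℝ)) →L[ℝ] ℝ := fderiv ℝ U with hf'
  have hder : ∀ᶠ p in nhds (t, x), HasFDerivAt U (f' p) p := by
    filter_upwards [hev] with p hp
    exact (hp.differentiableAt (by simp)).hasFDerivAt
  have hf'd : DifferentiableAt ℝ f' (t, x) :=
    (hu.fderiv_right (m := (⊤ : ℕ∞)) ((by simp))).differentiableAt (by simp)
  set f'' := fderiv ℝ f' (t, x) with hf''
  have hsymm : ∀ v w, f'' v w = f'' w v :=
    second_derivative_symmetric_of_eventually hder hf'd.hasFDerivAt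
  have hslice2 : ∀ p : ℝ × (Fin m → ℝ), ContDiffAt ℝ 2 U p →
      pd (u p.1) i p.2 = f' p (0, Pi.single i 1) := by
    intro p hp
    have hcomp : HasFDerivAt (fun y => U (p.1, y))
        ((f' p).comp ((0 : (Fin m → ℝ) →L[ℝ] ℝ).prod (ContinuousLinearMap.id ℝ _))) p.2 :=
      ((hp.differentiableAt (by simp)).hasFDerivAt).comp (f := fun y : Fin m → ℝ => (p.1, y)) p.2
        ((hasFDerivAt_const p.1 p.2).prodMk (hasFDerivAt_id p.2))
    have h0 : pd (u p.1) i p.2 = fderiv ℝ (fun y => U (p.1, y)) p.2 (Pi.single i 1) := rfl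
    rw [h0, hcomp.fderiv]; rfl
  have hslice1 : ∀ p : ℝ × (Fin m → ℝ), ContDiffAt ℝ 2 U p →
      deriv (fun s => u s p.2) p.1 = f' p (1, 0) := by
    intro p hp
    have h2 : HasDerivAt (fun s : ℝ => (s, p.2)) ((1 : ℝ), (0 : Fin m → ℝ)) p.1 :=
      (hasDerivAt_id p.1).prodMk (hasDerivAt_const p.1 p.2)
    exact (((hp.differentiableAt (by simp)).hasFDerivAt).comp_hasDerivAt p.1 h2).deriv
  -- LHS
  have hL : deriv (fun s => pd (u s) i x) t = f'' (1, 0) (0, Pi.single i 1) := by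
    have hevt : ∀ᶠ s in nhds t, ContDiffAt ℝ 2 U (s, x) :=
      ((continuous_id.prodMk continuous_const).tendsto t).eventually hev
    have heq : (fun s => pd (u s) i x) =ᶠ[nhds t] fun s => f' (s, x) (0, Pi.single i 1) := by
      filter_upwards [hevt] with s hs; exact hslice2 (s, x) hs
    rw [heq.deriv_eq]
    have h2 : HasDerivAt (fun s : ℝ => (s, x)) ((1 : ℝ), (0 : Fin m → ℝ)) t :=
      (hasDerivAt_id t).prodMk (hasDerivAt_const t x)
    have h3 : HasDerivAt (fun s => f' (s, x)) (f'' (1, 0)) t :=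
      (hf'd.hasFDerivAt).comp_hasDerivAt t h2
    exact (((ContinuousLinearMap.apply ℝ ℝ
      (((0 : ℝ), Pi.single i 1) : ℝ × (Fin m → ℝ))).hasFDerivAt).comp_hasDerivAt t h3).deriv
  -- RHS
  have hR : pd (fun y => deriv (fun s => u s y) t) i x = f'' (0, Pi.single i 1) (1, 0) := by
    have hevx : ∀ᶠ y in nhds x, ContDiffAt ℝ 2 U (t, y) :=
      ((continuous_const.prodMk continuous_id).tendsto x).eventually hev
    have heq : (fun y => deriv (fun s => u s y) t) =ᶠ[nhds x] fun y => f' (t, y) (1, 0) := by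
      filter_upwards [hevx] with y hy; exact hslice1 (t, y) hy
    rw [pd_congr_nhds heq]
    have h2 : HasFDerivAt (fun y : Fin m → ℝ => ((t, y) : ℝ × (Fin m → ℝ)))
        ((0 : (Fin m → ℝ) →L[ℝ] ℝ).prod (ContinuousLinearMap.id ℝ _)) x :=
      (hasFDerivAt_const t x).prodMk (hasFDerivAt_id x)
    have h3 : HasFDerivAt (fun y => f' (t, y))
        (f''.comp ((0 : (Fin m → ℝ) →L[ℝ] ℝ).prod (ContinuousLinearMap.id ℝ _))) x :=
      (hf'd.hasFDerivAt).comp x h2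
    have h4 : HasFDerivAt (fun y => f' (t, y) (1, 0))
        (((ContinuousLinearMap.apply ℝ ℝ (((1 : ℝ), (0 : Fin m → ℝ)))).comp
          (f''.comp ((0 : (Fin m → ℝ) →L[ℝ] ℝ).prod (ContinuousLinearMap.id ℝ _))))) x :=
      ((ContinuousLinearMap.apply ℝ ℝ
        (((1 : ℝ), (0 : Fin m → ℝ)))).hasFDerivAt).comp x h3
    have h0 : pd (fun y => f' (t, y) (1, 0)) i x
        = fderiv ℝ (fun y => f' (t, y) (1, 0)) x (Pi.single i 1) := rfl
    rw [h0, h4.fderiv]; rfl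
  rw [hL, hR, hsymm]


section Smoothness

lemma ContDiffAt.finset_prod' {E : Type*} [NormedAddCommGroup E] [NormedSpace ℝ E]
    {ι : Type*} {s : Finset ι} {f : ι → E → ℝ} {x : E}
    (h : ∀ i ∈ s, ContDiffAt ℝ (⊤ : ℕ∞) (f i) x) :
    ContDiffAt ℝ (⊤ : ℕ∞) (fun e => ∏ i ∈ s, f i e) x := by
  classical
  induction s using Finset.induction with
  | empty => simpa using contDiffAt_const
  | @insert a s hnotmem ih =>
      simp only [Finset.prod_insert hnotmem]
      exact (h _ (Finset.mem_insert_self _ _)).mul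
        (ih fun i hi => h i (Finset.mem_insert_of_mem hi))

lemma ContDiffAt.matrix_det' {E : Type*} [NormedAddCommGroup E] [NormedSpace ℝ E]
    {k : ℕ} {M : E → Matrix (Fin k) (Fin k) ℝ} {x : E}
    (h : ∀ i j, ContDiffAt ℝ (⊤ : ℕ∞) (fun e => M e i j) x) :
    ContDiffAt ℝ (⊤ : ℕ∞) (fun e => (M e).det) x := by
  simp only [Matrix.det_apply]
  apply ContDiffAt.sum
  intro σ _
  simp only [Units.smul_def, zsmul_eq_mul]
  exact contDiffAt_const.mul (ContDiffAt.finset_prod' fun i _ => h _ _)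

variable {m n : ℕ} {F : ℝ → (Fin m → ℝ) → (Fin n → ℝ)}
  (hF : ContDiff ℝ (⊤ : ℕ∞) (fun p : ℝ × (Fin m → ℝ) => F p.1 p.2))

section
include hF
variable {q : ℝ × (Fin m → ℝ)}

lemma cjF (α : Fin n) : ContDiffAt ℝ (⊤ : ℕ∞) (fun p : ℝ × (Fin m → ℝ) => F p.1 p.2 α) q :=
  ((ContinuousLinearMap.proj α : ((Fin n → ℝ)) →L[ℝ] ℝ).contDiff.comp hF).contDiffAt

lemma cjFd (α : Fin n) (i : Fin m) :
    ContDiffAt ℝ (⊤ : ℕ∞) (fun p : ℝ × (Fin m → ℝ) => Fd (F p.1) α i p.2) q :=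
  contDiffAt_pd_uncurry (u := fun s y => F s y α) (cjF hF α) i

lemma cjgInd (i j : Fin m) :
    ContDiffAt ℝ (⊤ : ℕ∞) (fun p : ℝ × (Fin m → ℝ) => gInd (F p.1) i j p.2) q := by
  apply ContDiffAt.sum; intro α _
  exact (cjFd hF α i).mul (cjFd hF α j)

lemma cjdet : ContDiffAt ℝ (⊤ : ℕ∞) (fun p : ℝ × (Fin m → ℝ) => (gMat (F p.1) p.2).det) q :=
  ContDiffAt.matrix_det' fun i j => cjgInd hF i j

lemma cjgInv (hq : (gMat (F q.1) q.2).det ≠ 0) (i j : Fin m) :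
    ContDiffAt ℝ (⊤ : ℕ∞) (fun p : ℝ × (Fin m → ℝ) => gInv (F p.1) i j p.2) q := by
  have hrw : ∀ p : ℝ × (Fin m → ℝ), gInv (F p.1) i j p.2
      = ((gMat (F p.1) p.2).det)⁻¹ * ((gMat (F p.1) p.2).updateRow j (Pi.single i 1)).det := by
    intro p
    rw [gInv, Matrix.inv_def, Matrix.smul_apply, Matrix.adjugate_apply, Ring.inverse_eq_inv',
      smul_eq_mul]
  simp only [hrw]
  apply ContDiffAt.mul
  · exact (contDiffAt_inv _ hq).comp q (cjdet hF)
  · apply ContDiffAt.matrix_det'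
    intro k l
    rcases eq_or_ne k j with rfl | hk
    · simp only [Matrix.updateRow_self]; exact contDiffAt_const
    · simp only [Matrix.updateRow_ne hk]; exact cjgInd hF k l

lemma cjpdgInd (i j k : Fin m) :
    ContDiffAt ℝ (⊤ : ℕ∞) (fun p : ℝ × (Fin m → ℝ) => pd (gInd (F p.1) i j) k p.2) q :=
  contDiffAt_pd_uncurry (u := fun s y => gInd (F s) i j y) (cjgInd hF i j) k

lemma cjchr (hq : (gMat (F q.1) q.2).det ≠ 0) (k i j : Fin m) :
    ContDiffAt ℝ (⊤ : ℕ∞) (fun p : ℝ × (Fin m → ℝ) => chr (F p.1) k i j p.2) q := by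
  unfold chr
  apply ContDiffAt.mul contDiffAt_const
  apply ContDiffAt.sum; intro l _
  exact (cjgInv hF hq k l).mul
    (((cjpdgInd hF l j i).add (cjpdgInd hF l i j)).sub (cjpdgInd hF i j l))

lemma cjsff (hq : (gMat (F q.1) q.2).det ≠ 0) (α : Fin n) (i j : Fin m) :
    ContDiffAt ℝ (⊤ : ℕ∞) (fun p : ℝ × (Fin m → ℝ) => sff (F p.1) α i j p.2) q := by
  unfold sff
  apply ContDiffAt.sub
  · exact contDiffAt_pd_uncurry (u := fun s y => Fd (F s) α j y) (cjFd hF α j) i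
  · exact ContDiffAt.sum fun k _ => (cjchr hF hq k i j).mul (cjFd hF α k)

lemma cjmcv (hq : (gMat (F q.1) q.2).det ≠ 0) (α : Fin n) :
    ContDiffAt ℝ (⊤ : ℕ∞) (fun p : ℝ × (Fin m → ℝ) => mcv (F p.1) α p.2) q := by
  unfold mcv
  exact ContDiffAt.sum fun i _ => ContDiffAt.sum fun j _ =>
    (cjgInv hF hq i j).mul (cjsff hF hq α i j)

end
end Smoothness


set_option linter.unusedSectionVars false

section Spatial
variable {m n : ℕ} {G : (Fin m → ℝ) → (Fin n → ℝ)}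

/-- Symmetry of second spatial partials. -/
lemma pd_pd_symm {f : (Fin m → ℝ) → ℝ} {y : Fin m → ℝ} (hf : ContDiffAt ℝ (⊤ : ℕ∞) f y) (i j : Fin m) :
    pd (fun z => pd f j z) i y = pd (fun z => pd f i z) j y := by
  have hd : DifferentiableAt ℝ (fderiv ℝ f) y :=
    (hf.fderiv_right (m := (⊤ : ℕ∞)) (by simp)).differentiableAt (by simp)
  have key : ∀ v w : Fin m → ℝ, fderiv ℝ (fun z => fderiv ℝ f z v) y w
      = fderiv ℝ (fderiv ℝ f) y w v := by
    intro v w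
    have h4 : HasFDerivAt (fun z => fderiv ℝ f z v)
        ((ContinuousLinearMap.apply ℝ ℝ v).comp (fderiv ℝ (fderiv ℝ f) y)) y :=
      (ContinuousLinearMap.apply ℝ ℝ v).hasFDerivAt.comp y hd.hasFDerivAt
    rw [h4.fderiv]; rfl
  have hsym := hf.isSymmSndFDerivAt (by simp only [minSmoothness_of_isRCLikeNormedField]; exact WithTop.coe_le_coe.mpr le_top)
  show fderiv ℝ (fun z => fderiv ℝ f z (Pi.single j 1)) y (Pi.single i 1)
      = fderiv ℝ (fun z => fderiv ℝ f z (Pi.single i 1)) y (Pi.single j 1)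
  rw [key, key]
  exact hsym _ _

variable (hG : ContDiff ℝ (⊤ : ℕ∞) G)
section
include hG

lemma csF (α : Fin n) {y : Fin m → ℝ} : ContDiffAt ℝ (⊤ : ℕ∞) (fun z => G z α) y :=
  ((ContinuousLinearMap.proj α : ((Fin n → ℝ)) →L[ℝ] ℝ).contDiff.comp hG).contDiffAt

lemma csFd (α : Fin n) (i : Fin m) {y : Fin m → ℝ} :
    ContDiffAt ℝ (⊤ : ℕ∞) (fun z => Fd G α i z) y :=
  contDiffAt_slice_snd (u := fun _ z => Fd G α i z) (t := 0)
    (cjFd (F := fun _ => G) (hG.comp contDiff_snd) α i)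

lemma schwarzFd (α : Fin n) (i j : Fin m) (y : Fin m → ℝ) :
    pd (Fd G α j) i y = pd (Fd G α i) j y :=
  pd_pd_symm (csF hG α) i j

/-- product rule for the metric -/
lemma pd_gInd (i j k : Fin m) (y : Fin m → ℝ) :
    pd (gInd G i j) k y
      = ∑ α, (pd (Fd G α i) k y * Fd G α j y + Fd G α i y * pd (Fd G α j) k y) := by
  have h1 : pd (gInd G i j) k y = pd (fun z => ∑ α, Fd G α i z * Fd G α j z) k y := rfl
  rw [h1, pd_sum (fun α _ => ((csFd hG α i).differentiableAt (by simp)).fun_mul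
    ((csFd hG α j).differentiableAt (by simp)))]
  exact Finset.sum_congr rfl fun α _ => pd_mul ((csFd hG α i).differentiableAt (by simp))
    ((csFd hG α j).differentiableAt (by simp)) k

end

lemma gInd_symm (i j : Fin m) (y : Fin m → ℝ) : gInd G i j y = gInd G j i y := by
  unfold gInd; exact Finset.sum_congr rfl fun α _ => mul_comm _ _

variable (hdet : ∀ y, (gMat G y).det ≠ 0)
section
include hdet

lemma ginv_g (i j : Fin m) (y : Fin m → ℝ) :
    ∑ k, gInv G i k y * gInd G k j y = if i = j then (1:ℝ) else 0 := by
  have h := Matrix.nonsing_inv_mul (gMat G y) (isUnit_iff_ne_zero.mpr (hdet y))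
  have h2 := congrFun (congrFun h i) j
  rw [Matrix.mul_apply, Matrix.one_apply] at h2
  exact h2

lemma g_ginv (i j : Fin m) (y : Fin m → ℝ) :
    ∑ k, gInd G i k y * gInv G k j y = if i = j then (1:ℝ) else 0 := by
  have h := Matrix.mul_nonsing_inv (gMat G y) (isUnit_iff_ne_zero.mpr (hdet y))
  have h2 := congrFun (congrFun h i) j
  rw [Matrix.mul_apply, Matrix.one_apply] at h2
  exact h2

lemma gInv_symm (i j : Fin m) (y : Fin m → ℝ) : gInv G i j y = gInv G j i y := by
  have ht : (gMat G y).transpose = gMat G y := by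
    ext a b; exact gInd_symm b a y
  have h : ((gMat G y)⁻¹).transpose = (gMat G y)⁻¹ := by
    rw [Matrix.transpose_nonsing_inv, ht]
  calc gInv G i j y = ((gMat G y)⁻¹).transpose j i := rfl
    _ = (gMat G y)⁻¹ j i := by rw [show ((gMat G y)⁻¹).transpose = (gMat G y)⁻¹ from h]
    _ = gInv G j i y := rfl

end

lemma chr_symm (k i j : Fin m) (y : Fin m → ℝ) : chr G k i j y = chr G k j i y := by
  unfold chr
  congr 1
  apply Finset.sum_congr rfl
  intro l _
  have h : gInd G j i = gInd G i j := funext fun z => gInd_symm j i z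
  rw [h]; ring

section
include hG hdet

lemma csmcv (α : Fin n) {y : Fin m → ℝ} :
    ContDiffAt ℝ (⊤ : ℕ∞) (fun z => mcv G α z) y :=
  contDiffAt_slice_snd (u := fun _ z => mcv G α z) (t := 0)
    (cjmcv (F := fun _ => G) (hG.comp contDiff_snd) (hdet y) α)

/-- `Γ` with lowered index. -/
lemma gammaLow (i j k : Fin m) (y : Fin m → ℝ) :
    ∑ p, chr G p i j y * gInd G p k y
      = (1/2) * (pd (gInd G k j) i y + pd (gInd G k i) j y - pd (gInd G i j) k y) := by
  set c : Fin m → ℝ := fun l =>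
    pd (gInd G l j) i y + pd (gInd G l i) j y - pd (gInd G i j) l y with hc
  have step1 : ∀ p, chr G p i j y * gInd G p k y
      = ∑ l, (1/2) * c l * (gInv G p l y * gInd G p k y) := by
    intro p
    show (1/2 * ∑ l, gInv G p l y * c l) * gInd G p k y = _
    simp only [Finset.mul_sum, Finset.sum_mul]
    exact Finset.sum_congr rfl fun l _ => by ring
  rw [Finset.sum_congr rfl fun p _ => step1 p, Finset.sum_comm]
  have step2 : ∀ l, ∑ p, (1/2) * c l * (gInv G p l y * gInd G p k y)
      = (1/2) * c l * (if l = k then (1:ℝ) else 0) := by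
    intro l
    rw [← Finset.mul_sum]
    congr 1
    rw [Finset.sum_congr rfl fun p _ => by rw [gInv_symm hdet p l y]]
    exact ginv_g hdet l k y
  rw [Finset.sum_congr rfl fun l _ => step2 l]
  simp [hc]

/-- The second fundamental form is orthogonal to the tangent vectors. -/
lemma AFzero (i j k : Fin m) (y : Fin m → ℝ) :
    ∑ α, sff G α i j y * Fd G α k y = 0 := by
  set T : Fin m → Fin m → Fin m → ℝ := fun a b c => ∑ α, pd (Fd G α b) a y * Fd G α c y with hT
  have hTsym : ∀ a b c, T a b c = T b a c := by
    intro a b c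
    exact Finset.sum_congr rfl fun α _ => by rw [schwarzFd hG α b a y]
  have hpdg : ∀ a b c, pd (gInd G b c) a y = T a b c + T a c b := by
    intro a b c
    rw [pd_gInd hG b c a y, Finset.sum_add_distrib]
    congr 1
    exact Finset.sum_congr rfl fun α _ => by ring
  have e0 : ∀ α, sff G α i j y * Fd G α k y
      = pd (Fd G α j) i y * Fd G α k y
        - ∑ p, chr G p i j y * Fd G α p y * Fd G α k y := by
    intro α
    unfold sff
    rw [sub_mul, Finset.sum_mul]
  have expand : ∑ α, sff G α i j y * Fd G α k y
      = T i j k - ∑ p, chr G p i j y * gInd G p k y := by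
    rw [Finset.sum_congr rfl fun α _ => e0 α, Finset.sum_sub_distrib]
    congr 1
    rw [Finset.sum_comm]
    apply Finset.sum_congr rfl
    intro p _
    have : ∑ α, chr G p i j y * Fd G α p y * Fd G α k y
        = chr G p i j y * ∑ α, Fd G α p y * Fd G α k y := by
      rw [Finset.mul_sum]
      exact Finset.sum_congr rfl fun α _ => by ring
    rw [this]
    rfl
  rw [expand, gammaLow hG hdet i j k y, hpdg, hpdg, hpdg]
  have e1 := hTsym i k j
  have e2 := hTsym j k i
  have e3 := hTsym j i k
  linarith

/-- The mean curvature vector is normal. -/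
lemma HFzero (k : Fin m) (y : Fin m → ℝ) :
    ∑ α, mcv G α y * Fd G α k y = 0 := by
  have h : ∑ α, mcv G α y * Fd G α k y
      = ∑ i, ∑ j, gInv G i j y * ∑ α, sff G α i j y * Fd G α k y := by
    unfold mcv
    have e : ∀ α, (∑ i, ∑ j, gInv G i j y * sff G α i j y) * Fd G α k y
        = ∑ i, ∑ j, gInv G i j y * (sff G α i j y * Fd G α k y) := by
      intro α
      rw [Finset.sum_mul]
      exact Finset.sum_congr rfl fun i _ => by
        rw [Finset.sum_mul]
        exact Finset.sum_congr rfl fun j _ => by ring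
    rw [Finset.sum_congr rfl fun α _ => e α, Finset.sum_comm]
    apply Finset.sum_congr rfl; intro i _
    rw [Finset.sum_comm]
    apply Finset.sum_congr rfl; intro j _
    rw [Finset.mul_sum]
  rw [h]
  simp [AFzero hG hdet]

/-- `∂_i H · F_k = - a_{ik}`. -/
lemma pdHF (i k : Fin m) (y : Fin m → ℝ) :
    ∑ α, pd (mcv G α) i y * Fd G α k y = - aT G i k y := by
  have hzero : (fun z => ∑ α, mcv G α z * Fd G α k z) = fun _ => (0:ℝ) :=
    funext fun z => HFzero hG hdet k z
  have h0 : pd (fun z => ∑ α, mcv G α z * Fd G α k z) i y = 0 := by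
    rw [hzero, pd_const]
  rw [pd_sum (fun α _ => ((csmcv hG hdet α).differentiableAt (by simp)).fun_mul
    ((csFd hG α k).differentiableAt (by simp)))] at h0
  rw [Finset.sum_congr rfl (fun α (_ : α ∈ Finset.univ) =>
    pd_mul ((csmcv hG hdet α).differentiableAt (by simp))
      ((csFd hG α k).differentiableAt (by simp)) i)] at h0
  rw [Finset.sum_add_distrib] at h0
  have hEta1 : ∀ β : Fin n, pd (fun z => mcv G β z) = pd (mcv G β) := fun _ => rfl
  have hEta2 : ∀ β : Fin n, pd (fun z => Fd G β k z) = pd (Fd G β k) := fun _ => rfl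
  simp only [hEta1, hEta2] at h0
  have hpdFd : ∀ α, pd (Fd G α k) i y = sff G α i k y + ∑ p, chr G p i k y * Fd G α p y := by
    intro α
    unfold sff
    ring
  have h2 : ∑ α, mcv G α y * pd (Fd G α k) i y = aT G i k y := by
    rw [Finset.sum_congr rfl fun α _ => by rw [hpdFd α]]
    have hsplit : ∑ α, mcv G α y * (sff G α i k y + ∑ p, chr G p i k y * Fd G α p y)
        = (∑ α, mcv G α y * sff G α i k y)
          + ∑ p, chr G p i k y * ∑ α, mcv G α y * Fd G α p y := by
      rw [Finset.sum_congr rfl fun α (_ : α ∈ Finset.univ) => mul_add _ _ _,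
        Finset.sum_add_distrib]
      congr 1
      have hpush : (∑ α, mcv G α y * ∑ p, chr G p i k y * Fd G α p y)
          = ∑ α, ∑ p, mcv G α y * (chr G p i k y * Fd G α p y) :=
        Finset.sum_congr rfl fun α _ => by rw [Finset.mul_sum]
      rw [hpush, Finset.sum_comm]
      apply Finset.sum_congr rfl; intro p _
      rw [Finset.mul_sum]
      exact Finset.sum_congr rfl fun α _ => by ring
    rw [hsplit]
    simp only [HFzero hG hdet, mul_zero, Finset.sum_const_zero, add_zero]
    rfl
  rw [h2] at h0
  linarith

lemma sff_symm (α : Fin n) (i j : Fin m) (y : Fin m → ℝ) :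
    sff G α i j y = sff G α j i y := by
  unfold sff
  rw [schwarzFd hG α j i y]
  congr 1
  exact Finset.sum_congr rfl fun k _ => by rw [chr_symm]

lemma aT_symm (i j : Fin m) (y : Fin m → ℝ) : aT G i j y = aT G j i y := by
  unfold aT
  exact Finset.sum_congr rfl fun α _ => by rw [sff_symm hG hdet α i j y]

end
end Spatial



section Spatial2
variable {m n : ℕ} {G : (Fin m → ℝ) → (Fin n → ℝ)}
variable (hG : ContDiff ℝ (⊤ : ℕ∞) G) (hdet : ∀ y, (gMat G y).det ≠ 0)
include hG hdet

/-- Expansion of `|∇^⊥ H|²`. -/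
lemma normNperpH2_eq (y : Fin m → ℝ) :
    normNperpH2 G y
      = (∑ α, ∑ i, ∑ j, gInv G i j y * (pd (mcv G α) i y * pd (mcv G α) j y))
        - normaT2 G y := by
  classical
  set P : Fin n → Fin m → ℝ := fun α i => pd (mcv G α) i y with hP
  set B : Fin m → Fin m → ℝ := fun i l => ∑ k, gInv G l k y * aT G i k y with hB
  set Q : Fin n → Fin m → ℝ := fun α i => ∑ l, B i l * Fd G α l y with hQ
  set R : Fin m → Fin m → ℝ := fun i j => ∑ l, B j l * aT G i l y with hR
  have hnper : ∀ α i, nperpH G i α y = P α i + Q α i := by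
    intro α i
    show pd (fun z => mcv G α z) i y + ∑ l, ∑ k, gInv G l k y * aT G i k y * Fd G α l y = _
    congr 1
    exact Finset.sum_congr rfl fun l _ => by simp only [hB]; rw [Finset.sum_mul]
  -- ⟨∂H_i, F_l⟩ = -a_{il}
  have hcontr : ∀ i l, ∑ α, P α i * Fd G α l y = - aT G i l y := fun i l => pdHF hG hdet i l y
  -- ⟨Q_i, Q_j⟩ auxiliary contraction : ∑_{l'} B j l' * gInd l l' = aT j l
  have hBg : ∀ j l, ∑ l', B j l' * gInd G l l' y = aT G j l y := by
    intro j l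
    have h1 : ∀ l', B j l' * gInd G l l' y
        = ∑ k, aT G j k y * (gInd G l l' y * gInv G l' k y) := by
      intro l'
      rw [hB, Finset.sum_mul]
      exact Finset.sum_congr rfl fun k _ => by ring
    rw [Finset.sum_congr rfl fun l' _ => h1 l', Finset.sum_comm]
    have h2 : ∀ k, ∑ l', aT G j k y * (gInd G l l' y * gInv G l' k y)
        = aT G j k y * (if l = k then (1:ℝ) else 0) := by
      intro k
      rw [← Finset.mul_sum, g_ginv hdet l k y]
    rw [Finset.sum_congr rfl fun k _ => h2 k]
    simp
  -- ⟨P_i, Q_j⟩ = -R i j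
  have hc2 : ∀ i j, ∑ α, P α i * Q α j = - R i j := by
    intro i j
    have h1 : ∀ α, P α i * Q α j = ∑ l, B j l * (P α i * Fd G α l y) := by
      intro α
      rw [hQ, Finset.mul_sum]
      exact Finset.sum_congr rfl fun l _ => by ring
    rw [Finset.sum_congr rfl fun α _ => h1 α, Finset.sum_comm]
    have h2 : ∀ l, ∑ α, B j l * (P α i * Fd G α l y) = B j l * (- aT G i l y) := by
      intro l
      rw [← Finset.mul_sum, hcontr i l]
    rw [Finset.sum_congr rfl fun l _ => h2 l, hR]
    rw [← Finset.sum_neg_distrib]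
    exact Finset.sum_congr rfl fun l _ => by ring
  -- ⟨Q_i, Q_j⟩ = R j i
  have hc4 : ∀ i j, ∑ α, Q α i * Q α j = R j i := by
    intro i j
    have h1 : ∀ α, Q α i * Q α j
        = ∑ l, ∑ l', B i l * B j l' * (Fd G α l y * Fd G α l' y) := by
      intro α
      rw [hQ, Finset.sum_mul_sum]
      exact Finset.sum_congr rfl fun l _ => Finset.sum_congr rfl fun l' _ => by ring
    rw [Finset.sum_congr rfl fun α _ => h1 α, Finset.sum_comm]
    have h2 : ∀ l, ∑ α, ∑ l', B i l * B j l' * (Fd G α l y * Fd G α l' y)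
        = ∑ l', B i l * (B j l' * gInd G l l' y) := by
      intro l
      rw [Finset.sum_comm]
      apply Finset.sum_congr rfl; intro l' _
      have : ∀ α, B i l * B j l' * (Fd G α l y * Fd G α l' y)
          = (B i l * B j l') * (Fd G α l y * Fd G α l' y) := fun α => rfl
      rw [← Finset.mul_sum]
      have hg : ∑ α, Fd G α l y * Fd G α l' y = gInd G l l' y := rfl
      rw [hg]; ring
    rw [Finset.sum_congr rfl fun l _ => h2 l]
    have h3 : ∀ l, ∑ l', B i l * (B j l' * gInd G l l' y)
        = B i l * aT G j l y := by
      intro l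
      rw [← Finset.mul_sum, hBg j l]
    rw [Finset.sum_congr rfl fun l _ => h3 l, hR]
  -- the inner products of the full normal derivative
  have hW : ∀ i j, (∑ α, nperpH G i α y * nperpH G j α y)
      = (∑ α, P α i * P α j) - R i j := by
    intro i j
    have h1 : ∀ α, nperpH G i α y * nperpH G j α y
        = P α i * P α j + P α i * Q α j + Q α i * P α j + Q α i * Q α j := by
      intro α; rw [hnper, hnper]; ring
    rw [Finset.sum_congr rfl fun α _ => h1 α]
    rw [Finset.sum_add_distrib, Finset.sum_add_distrib, Finset.sum_add_distrib]
    have hc3 : ∑ α, Q α i * P α j = - R j i := by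
      rw [← hc2 j i]
      exact Finset.sum_congr rfl fun α _ => by ring
    rw [hc2 i j, hc3, hc4 i j]
    ring
  -- put it together
  have hmain : normNperpH2 G y = ∑ i, ∑ j, gInv G i j y * (∑ α, nperpH G i α y * nperpH G j α y) := by
    show (∑ α, ∑ i, ∑ j, gInv G i j y * nperpH G i α y * nperpH G j α y) = _
    rw [Finset.sum_comm]
    apply Finset.sum_congr rfl; intro i _
    rw [Finset.sum_comm]
    apply Finset.sum_congr rfl; intro j _
    rw [Finset.mul_sum]
    exact Finset.sum_congr rfl fun α _ => by ring
  rw [hmain]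
  rw [Finset.sum_congr rfl fun i _ => Finset.sum_congr rfl fun j (_ : j ∈ Finset.univ) => by
    rw [hW i j, mul_sub]]
  rw [Finset.sum_congr rfl fun i (_ : i ∈ Finset.univ) => Finset.sum_sub_distrib _ _]
  rw [Finset.sum_sub_distrib]
  congr 1
  · -- first term : push α back out
    have h1 : ∀ i j, gInv G i j y * (∑ α, P α i * P α j)
        = ∑ α, gInv G i j y * (P α i * P α j) := fun i j => Finset.mul_sum _ _ _
    rw [Finset.sum_congr rfl fun i _ => Finset.sum_congr rfl fun j (_ : j ∈ Finset.univ) => h1 i j]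
    rw [Finset.sum_congr rfl fun i (_ : i ∈ Finset.univ) => Finset.sum_comm]
    rw [Finset.sum_comm]
  · -- ∑ gInv R = normaT2
    have hexp : ∀ i j, gInv G i j y * R i j
        = ∑ l, ∑ k, gInv G i j y * gInv G l k y * aT G j k y * aT G i l y := by
      intro i j
      simp only [hR, hB, Finset.mul_sum, Finset.sum_mul]
      exact Finset.sum_congr rfl fun l _ => Finset.sum_congr rfl fun k _ => by ring
    rw [Finset.sum_congr rfl fun i _ => Finset.sum_congr rfl fun j (_ : j ∈ Finset.univ) =>
      hexp i j]
    show _ = ∑ i, ∑ j, ∑ k, ∑ l,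
      gInv G i k y * gInv G j l y * aT G i j y * aT G k l y
    apply Finset.sum_congr rfl; intro i _
    rw [Finset.sum_comm]
    exact Finset.sum_congr rfl fun l _ => Finset.sum_congr rfl fun j _ =>
      Finset.sum_congr rfl fun k _ => by ring

/-- Expansion of `Δ|H|²`. -/
lemma lapBel_normH2_eq (y : Fin m → ℝ) :
    lapBel G (normH2 G) y
      = 2 * (∑ α, ∑ i, ∑ j, gInv G i j y * (pd (mcv G α) i y * pd (mcv G α) j y))
        + 2 * ∑ α, mcv G α y *
            (∑ i, ∑ j, gInv G i j y * (pd (fun z => pd (mcv G α) i z) j y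
               - ∑ k, chr G k i j y * pd (mcv G α) k y)) := by
  classical
  have hdm : ∀ (α : Fin n) (z : Fin m → ℝ), DifferentiableAt ℝ (fun w => mcv G α w) z :=
    fun α z => (csmcv hG hdet α).differentiableAt (by simp)
  have hdpd : ∀ (α : Fin n) (i : Fin m) (z : Fin m → ℝ),
      DifferentiableAt ℝ (fun w => pd (mcv G α) i w) z :=
    fun α i z => (contDiffAt_pd (csmcv hG hdet α) i).differentiableAt (by simp)
  have hpdN : ∀ (k : Fin m) (z : Fin m → ℝ),
      pd (normH2 G) k z = ∑ α, 2 * (mcv G α z * pd (mcv G α) k z) := by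
    intro k z
    have h0 : normH2 G = fun w => ∑ α, mcv G α w * mcv G α w := by
      funext w
      exact Finset.sum_congr rfl fun α _ => by rw [pow_two]
    rw [h0, pd_sum (fun α _ => (hdm α z).fun_mul (hdm α z))]
    exact Finset.sum_congr rfl fun α _ => by
      rw [pd_mul (hdm α z) (hdm α z)]; ring
  set C : Fin n → Fin m → ℝ := fun α k => pd (mcv G α) k y with hC
  set D2 : Fin n → Fin m → Fin m → ℝ := fun α i j => pd (fun z => pd (mcv G α) i z) j y with hD2
  set E : Fin n → Fin m → Fin m → ℝ := fun α i j => ∑ k, chr G k i j y * pd (mcv G α) k y with hE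
  set H : Fin n → ℝ := fun α => mcv G α y with hH
  -- second spatial derivative of |H|^2
  have hin1 : ∀ i j, pd (fun z => pd (normH2 G) i z) j y
      = ∑ α, (2 * (C α j * C α i) + 2 * (H α * D2 α i j)) := by
    intro i j
    have h0 : (fun z => pd (normH2 G) i z)
        = fun z => ∑ α, 2 * (mcv G α z * pd (mcv G α) i z) := funext fun z => hpdN i z
    rw [h0, pd_sum (fun α _ => (((hdm α y).fun_mul (hdpd α i y)).const_mul 2))]
    apply Finset.sum_congr rfl; intro α _
    rw [pd_const_mul ((hdm α y).fun_mul (hdpd α i y)) 2 j,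
      pd_mul (hdm α y) (hdpd α i y) j]
    simp only [hC, hD2, hH]
    ring
  -- the Γ-correction term
  have hin2 : ∀ i j, ∑ k, chr G k i j y * pd (normH2 G) k y
      = ∑ α, 2 * (H α * E α i j) := by
    intro i j
    have h1 : ∀ k, chr G k i j y * pd (normH2 G) k y
        = ∑ α, 2 * (H α * (chr G k i j y * C α k)) := by
      intro k
      rw [hpdN k y, Finset.mul_sum]
      exact Finset.sum_congr rfl fun α _ => by simp only [hC, hH]; ring
    rw [Finset.sum_congr rfl fun k _ => h1 k, Finset.sum_comm]
    apply Finset.sum_congr rfl; intro α _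
    simp only [hE, hC, Finset.mul_sum]
  -- canonical form
  have hL : lapBel G (normH2 G) y
      = ∑ i, ∑ j, ∑ α, (2 * (gInv G i j y * (C α i * C α j))
          + 2 * (gInv G i j y * (H α * (D2 α i j - E α i j)))) := by
    show ∑ i, ∑ j, gInv G i j y * (pd (fun z => pd (normH2 G) i z) j y
        - ∑ k, chr G k i j y * pd (normH2 G) k y) = _
    apply Finset.sum_congr rfl; intro i _
    apply Finset.sum_congr rfl; intro j _
    rw [hin1 i j, hin2 i j, ← Finset.sum_sub_distrib, Finset.mul_sum]
    exact Finset.sum_congr rfl fun α _ => by ring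
  rw [hL]
  -- match with the right-hand side
  have hR1 : (∑ α, ∑ i, ∑ j, gInv G i j y * (pd (mcv G α) i y * pd (mcv G α) j y))
      = ∑ i, ∑ j, ∑ α, gInv G i j y * (C α i * C α j) := by
    rw [Finset.sum_comm]
    exact Finset.sum_congr rfl fun i _ => Finset.sum_comm
  have hR2 : (∑ α, mcv G α y *
        (∑ i, ∑ j, gInv G i j y * (pd (fun z => pd (mcv G α) i z) j y
           - ∑ k, chr G k i j y * pd (mcv G α) k y)))
      = ∑ i, ∑ j, ∑ α, gInv G i j y * (H α * (D2 α i j - E α i j)) := by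
    have h1 : ∀ α, mcv G α y *
        (∑ i, ∑ j, gInv G i j y * (pd (fun z => pd (mcv G α) i z) j y
           - ∑ k, chr G k i j y * pd (mcv G α) k y))
        = ∑ i, ∑ j, gInv G i j y * (H α * (D2 α i j - E α i j)) := by
      intro α
      rw [Finset.mul_sum]
      apply Finset.sum_congr rfl; intro i _
      rw [Finset.mul_sum]
      apply Finset.sum_congr rfl; intro j _
      simp only [hH, hD2, hE]
      ring
    rw [Finset.sum_congr rfl fun α _ => h1 α, Finset.sum_comm]
    exact Finset.sum_congr rfl fun i _ => Finset.sum_comm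
  rw [hR1, hR2]
  simp only [Finset.mul_sum]
  rw [← Finset.sum_add_distrib]
  refine Finset.sum_congr rfl fun i _ => ?_
  rw [← Finset.sum_add_distrib]
  refine Finset.sum_congr rfl fun j _ => ?_
  rw [← Finset.sum_add_distrib]

end Spatial2



section Time
variable {m n : ℕ} {F : ℝ → (Fin m → ℝ) → (Fin n → ℝ)} {t : ℝ} {x : Fin m → ℝ}
variable (hF : ContDiff ℝ (⊤ : ℕ∞) (fun p : ℝ × (Fin m → ℝ) => F p.1 p.2))
variable (hdt : ∀ y, (gMat (F t) y).det ≠ 0)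
variable (hM : ∀ y α, deriv (fun s => F s y α) t = mcv (F t) α y)

section
include hF hM

/-- Time derivative of `F^α_i` under MCF. -/
lemma dFd_eq (α : Fin n) (i : Fin m) (y : Fin m → ℝ) :
    deriv (fun s => Fd (F s) α i y) t = pd (mcv (F t) α) i y := by
  have h := deriv_pd_comm (u := fun s z => F s z α) (cjF hF α (q := (t, y))) i
  have h2 : (fun z => deriv (fun s => F s z α) t) = mcv (F t) α := funext fun z => hM z α
  rw [h2] at h
  exact h

end

section
include hF hdt hM

/-- Time derivative of the metric: `∂_t g_{ij} = -2 a_{ij}`. -/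
lemma dgInd_eq (i j : Fin m) (y : Fin m → ℝ) :
    deriv (fun s => gInd (F s) i j y) t = -2 * aT (F t) i j y := by
  have hGt : ContDiff ℝ (⊤ : ℕ∞) (F t) := hF.comp (contDiff_const.prodMk contDiff_id)
  have hdF : ∀ (α : Fin n) (k : Fin m), DifferentiableAt ℝ (fun s => Fd (F s) α k y) t :=
    fun α k => (contDiffAt_slice_fst (u := fun s z => Fd (F s) α k z)
      (cjFd hF α k (q := (t, y)))).differentiableAt (by simp)
  have h1 : deriv (fun s => gInd (F s) i j y) t
      = ∑ α, deriv (fun s => Fd (F s) α i y * Fd (F s) α j y) t := by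
    have h0 : (fun s => gInd (F s) i j y)
        = fun s => ∑ α, Fd (F s) α i y * Fd (F s) α j y := rfl
    rw [h0, deriv_fun_sum (fun α _ => (hdF α i).fun_mul (hdF α j))]
  have h2 : ∀ α, deriv (fun s => Fd (F s) α i y * Fd (F s) α j y) t
      = pd (mcv (F t) α) i y * Fd (F t) α j y + Fd (F t) α i y * pd (mcv (F t) α) j y := by
    intro α
    rw [deriv_fun_mul (hdF α i) (hdF α j), dFd_eq hF hM α i y, dFd_eq hF hM α j y]
  rw [h1, Finset.sum_congr rfl fun α _ => h2 α, Finset.sum_add_distrib]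
  have h3 : ∑ α, pd (mcv (F t) α) i y * Fd (F t) α j y = - aT (F t) i j y :=
    pdHF hGt hdt i j y
  have h4 : ∑ α, Fd (F t) α i y * pd (mcv (F t) α) j y = - aT (F t) i j y := by
    have h5 : ∑ α, Fd (F t) α i y * pd (mcv (F t) α) j y
        = ∑ α, pd (mcv (F t) α) j y * Fd (F t) α i y :=
      Finset.sum_congr rfl fun α _ => mul_comm _ _
    rw [h5, pdHF hGt hdt j i y, aT_symm hGt hdt j i y]
  rw [h3, h4]
  ring

/-- Time derivative of the inverse metric: `∂_t g^{ij} = 2 a^{ij}`. -/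
lemma dgInv_eq (i j : Fin m) :
    deriv (fun s => gInv (F s) i j x) t
      = 2 * ∑ k, ∑ l, gInv (F t) i k x * aT (F t) k l x * gInv (F t) l j x := by
  classical
  have hGt : ContDiff ℝ (⊤ : ℕ∞) (F t) := hF.comp (contDiff_const.prodMk contDiff_id)
  have hdsgInv : ∀ a b, DifferentiableAt ℝ (fun s => gInv (F s) a b x) t := fun a b =>
    (contDiffAt_slice_fst (u := fun s z => gInv (F s) a b z)
      (cjgInv hF (hdt x) a b (q := (t, x)))).differentiableAt (by simp)
  have hdsgInd : ∀ a b, DifferentiableAt ℝ (fun s => gInd (F s) a b x) t := fun a b =>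
    (contDiffAt_slice_fst (u := fun s z => gInd (F s) a b z)
      (cjgInd hF a b (q := (t, x)))).differentiableAt (by simp)
  set DG : Fin m → Fin m → ℝ := fun a b => deriv (fun s => gInv (F s) a b x) t with hDG
  -- the inverse identity holds near t
  have hcont : ContinuousAt (fun s => (gMat (F s) x).det) t :=
    (contDiffAt_slice_fst (u := fun s z => (gMat (F s) z).det)
      (cjdet hF (q := (t, x)))).continuousAt
  have hne : ∀ᶠ s in nhds t, (gMat (F s) x).det ≠ 0 := hcont.eventually_ne (hdt x)
  have heq0 : ∀ p : Fin m, deriv (fun s => ∑ k, gInv (F s) i k x * gInd (F s) k p x) t = 0 := by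
    intro p
    have hdelta : (fun s => ∑ k, gInv (F s) i k x * gInd (F s) k p x)
        =ᶠ[nhds t] fun _ => (if i = p then (1:ℝ) else 0) := by
      filter_upwards [hne] with s hs
      have h := Matrix.nonsing_inv_mul (gMat (F s) x) (isUnit_iff_ne_zero.mpr hs)
      have h2 := congrFun (congrFun h i) p
      rw [Matrix.mul_apply, Matrix.one_apply] at h2
      exact h2
    rw [hdelta.deriv_eq]
    exact deriv_const _ _
  -- product rule
  have heq1 : ∀ p : Fin m,
      ∑ k, DG i k * gInd (F t) k p x = 2 * ∑ k, gInv (F t) i k x * aT (F t) k p x := by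
    intro p
    have hexp : deriv (fun s => ∑ k, gInv (F s) i k x * gInd (F s) k p x) t
        = ∑ k, (DG i k * gInd (F t) k p x
            + gInv (F t) i k x * (-2 * aT (F t) k p x)) := by
      rw [deriv_fun_sum (fun k _ => (hdsgInv i k).fun_mul (hdsgInd k p))]
      exact Finset.sum_congr rfl fun k _ => by
        rw [deriv_fun_mul (hdsgInv i k) (hdsgInd k p), dgInd_eq hF hdt hM k p x]
    rw [heq0 p, Finset.sum_add_distrib] at hexp
    have : ∑ k, gInv (F t) i k x * (-2 * aT (F t) k p x)
        = -2 * ∑ k, gInv (F t) i k x * aT (F t) k p x := by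
      rw [Finset.mul_sum]
      exact Finset.sum_congr rfl fun k _ => by ring
    rw [this] at hexp
    linarith
  -- contract with the inverse metric
  have hcontract : DG i j = ∑ p, (∑ k, DG i k * gInd (F t) k p x) * gInv (F t) p j x := by
    have h1 : ∀ p, (∑ k, DG i k * gInd (F t) k p x) * gInv (F t) p j x
        = ∑ k, DG i k * (gInd (F t) k p x * gInv (F t) p j x) := by
      intro p
      rw [Finset.sum_mul]
      exact Finset.sum_congr rfl fun k _ => by ring
    rw [Finset.sum_congr rfl fun p _ => h1 p, Finset.sum_comm]
    have h2 : ∀ k, ∑ p, DG i k * (gInd (F t) k p x * gInv (F t) p j x)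
        = DG i k * (if k = j then (1:ℝ) else 0) := by
      intro k
      rw [← Finset.mul_sum, g_ginv hdt k j x]
    rw [Finset.sum_congr rfl fun k _ => h2 k]
    simp
  show DG i j = _
  rw [hcontract, Finset.sum_congr rfl fun p _ => by rw [heq1 p]]
  have hstep : ∀ p, (2 * ∑ k, gInv (F t) i k x * aT (F t) k p x) * gInv (F t) p j x
      = ∑ k, 2 * (gInv (F t) i k x * aT (F t) k p x * gInv (F t) p j x) := by
    intro p
    rw [Finset.mul_sum, Finset.sum_mul]
    exact Finset.sum_congr rfl fun k _ => by ring
  rw [Finset.sum_congr rfl fun p _ => hstep p, Finset.sum_comm, Finset.mul_sum]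
  apply Finset.sum_congr rfl; intro k _
  rw [Finset.mul_sum]

/-- Time derivative of the second fundamental form, contracted with `H`. -/
lemma dsffH_eq (i j : Fin m) :
    ∑ α, mcv (F t) α x * deriv (fun s => sff (F s) α i j x) t
      = ∑ α, mcv (F t) α x * (pd (fun z => pd (mcv (F t) α) j z) i x
          - ∑ k, chr (F t) k i j x * pd (mcv (F t) α) k x) := by
  classical
  have hGt : ContDiff ℝ (⊤ : ℕ∞) (F t) := hF.comp (contDiff_const.prodMk contDiff_id)
  have hdchr : ∀ k, DifferentiableAt ℝ (fun s => chr (F s) k i j x) t := fun k =>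
    (contDiffAt_slice_fst (u := fun s z => chr (F s) k i j z)
      (cjchr hF (hdt x) k i j (q := (t, x)))).differentiableAt (by simp)
  have hdF : ∀ (α : Fin n) (k : Fin m), DifferentiableAt ℝ (fun s => Fd (F s) α k x) t :=
    fun α k => (contDiffAt_slice_fst (u := fun s z => Fd (F s) α k z)
      (cjFd hF α k (q := (t, x)))).differentiableAt (by simp)
  have hdpdF : ∀ α : Fin n, DifferentiableAt ℝ (fun s => pd (Fd (F s) α j) i x) t := fun α =>
    (contDiffAt_slice_fst (u := fun s z => pd (Fd (F s) α j) i z)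
      (contDiffAt_pd_uncurry (u := fun s z => Fd (F s) α j z)
        (cjFd hF α j (q := (t, x))) i)).differentiableAt (by simp)
  have hdpdFd : ∀ α : Fin n, deriv (fun s => pd (Fd (F s) α j) i x) t
      = pd (fun z => pd (mcv (F t) α) j z) i x := by
    intro α
    have h := deriv_pd_comm (u := fun s z => Fd (F s) α j z)
      (cjFd hF α j (q := (t, x))) i
    have h2 : (fun z => deriv (fun s => Fd (F s) α j z) t)
        = fun z => pd (mcv (F t) α) j z := funext fun z => dFd_eq hF hM α j z
    rw [h2] at h
    exact h
  have hdsff : ∀ α : Fin n, deriv (fun s => sff (F s) α i j x) t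
      = pd (fun z => pd (mcv (F t) α) j z) i x
        - ∑ k, (deriv (fun s => chr (F s) k i j x) t * Fd (F t) α k x
            + chr (F t) k i j x * pd (mcv (F t) α) k x) := by
    intro α
    have h0 : (fun s => sff (F s) α i j x)
        = fun s => pd (Fd (F s) α j) i x - ∑ k, chr (F s) k i j x * Fd (F s) α k x := rfl
    rw [h0, deriv_fun_sub (hdpdF α) (DifferentiableAt.fun_sum fun k _ => (hdchr k).fun_mul (hdF α k))]
    rw [hdpdFd α, deriv_fun_sum (fun k _ => (hdchr k).fun_mul (hdF α k))]
    congr 1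
    exact Finset.sum_congr rfl fun k _ => by
      rw [deriv_fun_mul (hdchr k) (hdF α k), dFd_eq hF hM α k x]
  rw [Finset.sum_congr rfl fun α _ => by rw [hdsff α]]
  have hsplit : ∀ α : Fin n, mcv (F t) α x * (pd (fun z => pd (mcv (F t) α) j z) i x
      - ∑ k, (deriv (fun s => chr (F s) k i j x) t * Fd (F t) α k x
          + chr (F t) k i j x * pd (mcv (F t) α) k x))
      = mcv (F t) α x * (pd (fun z => pd (mcv (F t) α) j z) i x
          - ∑ k, chr (F t) k i j x * pd (mcv (F t) α) k x)
        - ∑ k, deriv (fun s => chr (F s) k i j x) t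
            * (mcv (F t) α x * Fd (F t) α k x) := by
    intro α
    rw [Finset.sum_add_distrib]
    have h1 : ∑ k, deriv (fun s => chr (F s) k i j x) t * (mcv (F t) α x * Fd (F t) α k x)
        = mcv (F t) α x * ∑ k, deriv (fun s => chr (F s) k i j x) t * Fd (F t) α k x := by
      rw [Finset.mul_sum]
      exact Finset.sum_congr rfl fun k _ => by ring
    rw [h1]
    ring
  rw [Finset.sum_congr rfl fun α _ => hsplit α, Finset.sum_sub_distrib]
  have hzero : ∑ α, ∑ k, deriv (fun s => chr (F s) k i j x) t
      * (mcv (F t) α x * Fd (F t) α k x) = 0 := by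
    rw [Finset.sum_comm]
    have h1 : ∀ k, ∑ α, deriv (fun s => chr (F s) k i j x) t
        * (mcv (F t) α x * Fd (F t) α k x)
        = deriv (fun s => chr (F s) k i j x) t * ∑ α, mcv (F t) α x * Fd (F t) α k x := by
      intro k
      rw [Finset.mul_sum]
    rw [Finset.sum_congr rfl fun k _ => h1 k]
    simp [HFzero hGt hdt]
  rw [hzero]
  ring

/-- The main time-derivative computation. -/
lemma timeMain :
    deriv (fun s => normH2 (F s) x) t
      = 4 * normaT2 (F t) x + 2 * ∑ α, mcv (F t) α x *
          (∑ i, ∑ j, gInv (F t) i j x * (pd (fun z => pd (mcv (F t) α) i z) j x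
             - ∑ k, chr (F t) k i j x * pd (mcv (F t) α) k x)) := by
  classical
  have hGt : ContDiff ℝ (⊤ : ℕ∞) (F t) := hF.comp (contDiff_const.prodMk contDiff_id)
  have hdsgInv : ∀ a b, DifferentiableAt ℝ (fun s => gInv (F s) a b x) t := fun a b =>
    (contDiffAt_slice_fst (u := fun s z => gInv (F s) a b z)
      (cjgInv hF (hdt x) a b (q := (t, x)))).differentiableAt (by simp)
  have hdssff : ∀ (α : Fin n) (a b : Fin m),
      DifferentiableAt ℝ (fun s => sff (F s) α a b x) t := fun α a b =>
    (contDiffAt_slice_fst (u := fun s z => sff (F s) α a b z)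
      (cjsff hF (hdt x) α a b (q := (t, x)))).differentiableAt (by simp)
  have hdsmcv : ∀ α : Fin n, DifferentiableAt ℝ (fun s => mcv (F s) α x) t := fun α =>
    (contDiffAt_slice_fst (u := fun s z => mcv (F s) α z)
      (cjmcv hF (hdt x) α (q := (t, x)))).differentiableAt (by simp)
  -- derivative of |H|^2
  have hLHS : deriv (fun s => normH2 (F s) x) t
      = ∑ α, 2 * (mcv (F t) α x * deriv (fun s => mcv (F s) α x) t) := by
    have h0 : (fun s => normH2 (F s) x) = fun s => ∑ α, mcv (F s) α x * mcv (F s) α x := by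
      funext s
      exact Finset.sum_congr rfl fun α _ => by rw [pow_two]
    rw [h0, deriv_fun_sum (fun α _ => (hdsmcv α).fun_mul (hdsmcv α))]
    exact Finset.sum_congr rfl fun α _ => by
      rw [deriv_fun_mul (hdsmcv α) (hdsmcv α)]; ring
  -- derivative of H^α
  have hdH : ∀ α : Fin n, deriv (fun s => mcv (F s) α x) t
      = ∑ i, ∑ j, (deriv (fun s => gInv (F s) i j x) t * sff (F t) α i j x
          + gInv (F t) i j x * deriv (fun s => sff (F s) α i j x) t) := by
    intro α
    have h0 : (fun s => mcv (F s) α x)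
        = fun s => ∑ i, ∑ j, gInv (F s) i j x * sff (F s) α i j x := rfl
    rw [h0, deriv_fun_sum (fun i _ => DifferentiableAt.fun_sum
      fun j _ => (hdsgInv i j).fun_mul (hdssff α i j))]
    apply Finset.sum_congr rfl; intro i _
    rw [deriv_fun_sum (fun j _ => (hdsgInv i j).fun_mul (hdssff α i j))]
    exact Finset.sum_congr rfl fun j _ => deriv_fun_mul (hdsgInv i j) (hdssff α i j)
  -- contract with H
  have hHdH : ∑ α, mcv (F t) α x * deriv (fun s => mcv (F s) α x) t
      = 2 * normaT2 (F t) x + ∑ α, mcv (F t) α x *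
          (∑ i, ∑ j, gInv (F t) i j x * (pd (fun z => pd (mcv (F t) α) i z) j x
             - ∑ k, chr (F t) k i j x * pd (mcv (F t) α) k x)) := by
    have h1 : ∀ α, mcv (F t) α x * deriv (fun s => mcv (F s) α x) t
        = (∑ i, ∑ j, deriv (fun s => gInv (F s) i j x) t
              * (mcv (F t) α x * sff (F t) α i j x))
          + ∑ i, ∑ j, gInv (F t) i j x
              * (mcv (F t) α x * deriv (fun s => sff (F s) α i j x) t) := by
      intro α
      rw [hdH α, Finset.mul_sum, ← Finset.sum_add_distrib]
      apply Finset.sum_congr rfl; intro i _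
      rw [Finset.mul_sum, ← Finset.sum_add_distrib]
      apply Finset.sum_congr rfl; intro j _
      ring
    rw [Finset.sum_congr rfl fun α _ => h1 α, Finset.sum_add_distrib]
    congr 1
    · -- first piece : 2 |a|²
      rw [Finset.sum_comm]
      have h2 : ∀ i, ∑ α, ∑ j, deriv (fun s => gInv (F s) i j x) t
          * (mcv (F t) α x * sff (F t) α i j x)
          = ∑ j, deriv (fun s => gInv (F s) i j x) t * aT (F t) i j x := by
        intro i
        rw [Finset.sum_comm]
        apply Finset.sum_congr rfl; intro j _
        rw [← Finset.mul_sum]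
        congr 1
      rw [Finset.sum_congr rfl fun i _ => h2 i]
      have h3 : ∀ i j, deriv (fun s => gInv (F s) i j x) t * aT (F t) i j x
          = ∑ k, ∑ l, 2 * (gInv (F t) i k x * aT (F t) k l x * gInv (F t) l j x
              * aT (F t) i j x) := by
        intro i j
        rw [dgInv_eq hF hdt hM i j, Finset.mul_sum, Finset.sum_mul]
        apply Finset.sum_congr rfl; intro k _
        rw [Finset.mul_sum, Finset.sum_mul]
        exact Finset.sum_congr rfl fun l _ => by ring
      rw [Finset.sum_congr rfl fun i _ => Finset.sum_congr rfl fun j (_ : j ∈ Finset.univ) =>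
        h3 i j]
      show _ = 2 * ∑ i, ∑ j, ∑ k, ∑ l,
        gInv (F t) i k x * gInv (F t) j l x * aT (F t) i j x * aT (F t) k l x
      rw [Finset.mul_sum]
      apply Finset.sum_congr rfl; intro i _
      rw [Finset.mul_sum]
      apply Finset.sum_congr rfl; intro j _
      rw [Finset.mul_sum]
      apply Finset.sum_congr rfl; intro k _
      rw [Finset.mul_sum]
      apply Finset.sum_congr rfl; intro l _
      rw [gInv_symm hdt l j x]
      ring
    · -- second piece : H · ΔH
      rw [Finset.sum_comm]
      rw [Finset.sum_congr rfl fun i (_ : i ∈ Finset.univ) => Finset.sum_comm]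
      have hB : ∀ i j, ∑ α, gInv (F t) i j x
          * (mcv (F t) α x * deriv (fun s => sff (F s) α i j x) t)
          = ∑ α, gInv (F t) i j x * (mcv (F t) α x
              * (pd (fun z => pd (mcv (F t) α) j z) i x
                - ∑ k, chr (F t) k i j x * pd (mcv (F t) α) k x)) := by
        intro i j
        have e1 : ∑ α, gInv (F t) i j x
            * (mcv (F t) α x * deriv (fun s => sff (F s) α i j x) t)
            = gInv (F t) i j x
              * ∑ α, mcv (F t) α x * deriv (fun s => sff (F s) α i j x) t := by
          rw [Finset.mul_sum]
        rw [e1, dsffH_eq hF hdt hM i j, Finset.mul_sum]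
      rw [Finset.sum_congr rfl fun i _ => Finset.sum_congr rfl fun j (_ : j ∈ Finset.univ) =>
        hB i j]
      rw [Finset.sum_congr rfl fun i (_ : i ∈ Finset.univ) => Finset.sum_comm]
      rw [Finset.sum_comm]
      apply Finset.sum_congr rfl; intro α _
      have hC : mcv (F t) α x * (∑ i, ∑ j, gInv (F t) i j x
            * (pd (fun z => pd (mcv (F t) α) i z) j x
              - ∑ k, chr (F t) k i j x * pd (mcv (F t) α) k x))
          = ∑ i, ∑ j, gInv (F t) i j x * (mcv (F t) α x
              * (pd (fun z => pd (mcv (F t) α) i z) j x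
                - ∑ k, chr (F t) k i j x * pd (mcv (F t) α) k x)) := by
        rw [Finset.mul_sum]
        apply Finset.sum_congr rfl; intro i _
        rw [Finset.mul_sum]
        exact Finset.sum_congr rfl fun j _ => by ring
      rw [hC, Finset.sum_comm]
      apply Finset.sum_congr rfl; intro b _
      apply Finset.sum_congr rfl; intro a _
      rw [gInv_symm hdt a b x]
      have he : (∑ k, chr (F t) k a b x * pd (mcv (F t) α) k x)
          = ∑ k, chr (F t) k b a x * pd (mcv (F t) α) k x :=
        Finset.sum_congr rfl fun k _ => by rw [chr_symm]
      rw [he]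
  rw [hLHS]
  have : ∑ α, 2 * (mcv (F t) α x * deriv (fun s => mcv (F s) α x) t)
      = 2 * ∑ α, mcv (F t) α x * deriv (fun s => mcv (F s) α x) t := by
    rw [Finset.mul_sum]
  rw [this, hHdH]
  ring

end
end Time


/-- Under mean curvature flow, `d/dt |H|² = Δ|H|² - 2|∇^⊥H|² + 2|a_{ij}|²`. -/
theorem meanCurvature_evolution {m n : ℕ} (F : ℝ → (Fin m → ℝ) → (Fin n → ℝ)) (T : ℝ)
    (hT : 0 < T)
    (hF : ContDiff ℝ (⊤ : ℕ∞) (fun p : ℝ × (Fin m → ℝ) => F p.1 p.2))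
    (himm : ∀ t ∈ Set.Ico (0 : ℝ) T, ∀ x, (gMat (F t) x).det ≠ 0)
    (hMCF : ∀ t ∈ Set.Ico (0 : ℝ) T, ∀ x α, deriv (fun s => F s x α) t = mcv (F t) α x) :
    ∀ t ∈ Set.Ico (0 : ℝ) T, ∀ x,
      deriv (fun s => normH2 (F s) x) t =
        lapBel (F t) (normH2 (F t)) x - 2 * normNperpH2 (F t) x + 2 * normaT2 (F t) x := by
  intro t ht x
  have hGt : ContDiff ℝ (⊤ : ℕ∞) (F t) := hF.comp (contDiff_const.prodMk contDiff_id)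
  have hdt : ∀ y, (gMat (F t) y).det ≠ 0 := himm t ht
  have hM : ∀ y α, deriv (fun s => F s y α) t = mcv (F t) α y := fun y α => hMCF t ht y α
  rw [timeMain hF hdt hM, lapBel_normH2_eq hGt hdt x, normNperpH2_eq hGt hdt x]
  ring

end
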